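/- Let m ≥ 1 and let F_i, F_j ∈ ℝ^{m×2}. Then the infimum over all orthogonal matrices Q ∈ O(2) of ‖F_j Q − F_i‖_F² equals tr(F_i F_iᵀ) + tr(F_j F_jᵀ) − 2·√(‖F_iᵀF_j‖_F² + 2·|det(F_iᵀF_j)|). -/

import Mathlib

/-!
Expanding the square, `‖F_j Q − F_i‖_F² = tr(F_i F_iᵀ) + tr(F_j F_jᵀ) − 2 tr(M Q)` with
`M = F_iᵀ F_j`, so the problem is to maximise `tr(M Q)` over `O(2)`. For any `2 × 2` matrix `N`,
`(tr N)² = ‖N‖_F² + 2 det N − (N₀₁ − N₁₀)²`; applied to `N = M Q` this bounds `tr(M Q)` by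
`√(‖M‖_F² + 2|det M|)`. The bound is attained by a rotation when `det M ≥ 0` and by a reflection
when `det M < 0`: over rotations `tr(M Q)` is a linear form in the unit vector `(cos θ, sin θ)`
with maximum `√((M₀₀ + M₁₁)² + (M₀₁ − M₁₀)²) = √(‖M‖_F² + 2 det M)`, and similarly for reflections.
-/

open Matrix

noncomputable def frobNorm {m n : ℕ} (A : Matrix (Fin m) (Fin n) ℝ) : ℝ :=
  Real.sqrt (Matrix.trace (Aᵀ * A))

section Orthogonal

variable {m n : ℕ} {Q : Matrix (Fin n) (Fin n) ℝ}

lemma trace_transpose_mul_self_nonneg (A : Matrix (Fin m) (Fin n) ℝ) : 0 ≤ trace (Aᵀ * A) := by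
  simp only [trace, diag, mul_apply, transpose_apply]
  exact Finset.sum_nonneg fun _ _ => Finset.sum_nonneg fun _ _ => mul_self_nonneg _

lemma frobNorm_sq (A : Matrix (Fin m) (Fin n) ℝ) : frobNorm A ^ 2 = trace (Aᵀ * A) :=
  Real.sq_sqrt (trace_transpose_mul_self_nonneg A)

lemma trace_transpose_mul_self_mul_orthogonal (hQ : Qᵀ * Q = 1) (A : Matrix (Fin m) (Fin n) ℝ) :
    trace ((A * Q)ᵀ * (A * Q)) = trace (Aᵀ * A) := by
  rw [transpose_mul, ← Matrix.mul_assoc, trace_mul_cycle, ← Matrix.mul_assoc Q,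
    mul_eq_one_comm.mp hQ, Matrix.one_mul]

lemma abs_det_eq_one_of_transpose_mul_self (hQ : Qᵀ * Q = 1) : |Q.det| = 1 := by
  have h := congrArg det hQ
  rw [det_mul, det_transpose, det_one] at h
  rcases mul_self_eq_one_iff.mp h with h | h <;> simp [h]

lemma frobNorm_mul_orthogonal_sub_sq (hQ : Qᵀ * Q = 1) (A B : Matrix (Fin m) (Fin n) ℝ) :
    frobNorm (B * Q - A) ^ 2 = trace (A * Aᵀ) + trace (B * Bᵀ) - 2 * trace (Aᵀ * B * Q) := by
  have hcross : trace ((B * Q)ᵀ * A) = trace (Aᵀ * B * Q) := by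
    rw [← trace_transpose, transpose_mul, transpose_transpose, Matrix.mul_assoc]
  rw [frobNorm_sq, transpose_sub, Matrix.sub_mul, Matrix.mul_sub, Matrix.mul_sub, trace_sub,
    trace_sub, trace_sub, trace_transpose_mul_self_mul_orthogonal hQ, hcross, ← Matrix.mul_assoc,
    trace_mul_comm Aᵀ, trace_mul_comm Bᵀ]
  ring

end Orthogonal

lemma trace_transpose_mul_self_fin_two (N : Matrix (Fin 2) (Fin 2) ℝ) :
    trace (Nᵀ * N) = N 0 0 ^ 2 + N 0 1 ^ 2 + N 1 0 ^ 2 + N 1 1 ^ 2 := by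
  simp only [trace_fin_two, mul_apply, transpose_apply, Fin.sum_univ_two]
  ring

lemma sq_trace_le_fin_two (N : Matrix (Fin 2) (Fin 2) ℝ) :
    trace N ^ 2 ≤ trace (Nᵀ * N) + 2 * N.det := by
  rw [trace_transpose_mul_self_fin_two, trace_fin_two, det_fin_two]
  nlinarith [sq_nonneg (N 0 1 - N 1 0)]

lemma trace_mul_orthogonal_le (M : Matrix (Fin 2) (Fin 2) ℝ) {Q : Matrix (Fin 2) (Fin 2) ℝ}
    (hQ : Qᵀ * Q = 1) : trace (M * Q) ≤ √(trace (Mᵀ * M) + 2 * |M.det|) := by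
  apply Real.le_sqrt_of_sq_le
  have hdet : M.det * Q.det ≤ |M.det| := by
    simpa [abs_mul, abs_det_eq_one_of_transpose_mul_self hQ] using le_abs_self (M.det * Q.det)
  calc trace (M * Q) ^ 2 ≤ trace ((M * Q)ᵀ * (M * Q)) + 2 * (M * Q).det := sq_trace_le_fin_two _
    _ ≤ trace (Mᵀ * M) + 2 * |M.det| := by
      rw [trace_transpose_mul_self_mul_orthogonal hQ, det_mul]
      linarith

lemma exists_sq_add_sq_eq_one_and_mul_add_mul_eq_sqrt (x y : ℝ) :
    ∃ p q : ℝ, p ^ 2 + q ^ 2 = 1 ∧ p * x + q * y = √(x ^ 2 + y ^ 2) := by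
  rcases eq_or_ne (x ^ 2 + y ^ 2) 0 with h | h
  · have hx : x = 0 := by nlinarith [sq_nonneg x, sq_nonneg y]
    exact ⟨1, 0, by norm_num, by rw [h, hx, Real.sqrt_zero]; ring⟩
  · have hpos : 0 < x ^ 2 + y ^ 2 := lt_of_le_of_ne (by positivity) h.symm
    have ht : 0 < √(x ^ 2 + y ^ 2) := Real.sqrt_pos.mpr hpos
    have ht2 : √(x ^ 2 + y ^ 2) ^ 2 = x ^ 2 + y ^ 2 := Real.sq_sqrt hpos.le
    refine ⟨x / √(x ^ 2 + y ^ 2), y / √(x ^ 2 + y ^ 2), ?_, ?_⟩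
    · field_simp
      linarith
    · field_simp
      linarith

lemma rotation_transpose_mul_self {p q : ℝ} (h : p ^ 2 + q ^ 2 = 1) :
    (!![p, -q; q, p])ᵀ * !![p, -q; q, p] = 1 := by
  ext i j
  fin_cases i <;> fin_cases j <;>
    simp only [Fin.isValue, Fin.zero_eta, Fin.mk_one, mul_apply, transpose_apply, of_apply, cons_val',
      cons_val_zero, cons_val_one, cons_val_fin_one, Fin.sum_univ_two, one_apply_eq, one_apply_ne,
      ne_eq, zero_ne_one, one_ne_zero, not_false_eq_true] <;>
    linarith

lemma reflection_transpose_mul_self {p q : ℝ} (h : p ^ 2 + q ^ 2 = 1) :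
    (!![p, q; q, -p])ᵀ * !![p, q; q, -p] = 1 := by
  ext i j
  fin_cases i <;> fin_cases j <;>
    simp only [Fin.isValue, Fin.zero_eta, Fin.mk_one, mul_apply, transpose_apply, of_apply, cons_val',
      cons_val_zero, cons_val_one, cons_val_fin_one, Fin.sum_univ_two, one_apply_eq, one_apply_ne,
      ne_eq, zero_ne_one, one_ne_zero, not_false_eq_true] <;>
    linarith

lemma exists_orthogonal_trace_mul_eq (M : Matrix (Fin 2) (Fin 2) ℝ) :
    ∃ Q : Matrix (Fin 2) (Fin 2) ℝ,
      Qᵀ * Q = 1 ∧ trace (M * Q) = √(trace (Mᵀ * M) + 2 * |M.det|) := by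
  rw [trace_transpose_mul_self_fin_two, det_fin_two]
  rcases le_or_gt 0 (M 0 0 * M 1 1 - M 0 1 * M 1 0) with hd | hd
  · obtain ⟨p, q, hpq, hmax⟩ :=
      exists_sq_add_sq_eq_one_and_mul_add_mul_eq_sqrt (M 0 0 + M 1 1) (M 0 1 - M 1 0)
    refine ⟨!![p, -q; q, p], rotation_transpose_mul_self hpq, ?_⟩
    rw [abs_of_nonneg hd, trace_fin_two]
    convert hmax using 1
    · simp only [mul_apply, Fin.sum_univ_two, of_apply, cons_val', cons_val_zero, cons_val_one,
        cons_val_fin_one]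
      ring
    · congr 1
      ring
  · obtain ⟨p, q, hpq, hmax⟩ :=
      exists_sq_add_sq_eq_one_and_mul_add_mul_eq_sqrt (M 0 0 - M 1 1) (M 0 1 + M 1 0)
    refine ⟨!![p, q; q, -p], reflection_transpose_mul_self hpq, ?_⟩
    rw [abs_of_neg hd, trace_fin_two]
    convert hmax using 1
    · simp only [mul_apply, Fin.sum_univ_two, of_apply, cons_val', cons_val_zero, cons_val_one,
        cons_val_fin_one]
      ring
    · congr 1
      ring

theorem stmt5_general (m : ℕ) (Fi Fj : Matrix (Fin m) (Fin 2) ℝ) :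
    sInf {x : ℝ | ∃ Q : Matrix (Fin 2) (Fin 2) ℝ,
        Qᵀ * Q = 1 ∧ x = (frobNorm (Fj * Q - Fi)) ^ 2}
      = Matrix.trace (Fi * Fiᵀ) + Matrix.trace (Fj * Fjᵀ)
        - 2 * Real.sqrt ((frobNorm (Fiᵀ * Fj)) ^ 2 + 2 * |(Fiᵀ * Fj).det|) := by
  rw [frobNorm_sq]
  refine IsLeast.csInf_eq ⟨?_, ?_⟩
  · obtain ⟨Q, hQ, hmax⟩ := exists_orthogonal_trace_mul_eq (Fiᵀ * Fj)
    exact ⟨Q, hQ, by rw [frobNorm_mul_orthogonal_sub_sq hQ, hmax]⟩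
  · rintro x ⟨Q, hQ, rfl⟩
    rw [frobNorm_mul_orthogonal_sub_sq hQ]
    linarith [trace_mul_orthogonal_le (Fiᵀ * Fj) hQ]

/-- The infimum over orthogonal `Q ∈ O(2)` of `‖F_j Q − F_i‖_F²` equals
`tr(F_i F_iᵀ) + tr(F_j F_jᵀ) − 2√(‖F_iᵀF_j‖_F² + 2|det(F_iᵀF_j)|)`. -/
theorem stmt5 (m : ℕ) (hm : 1 ≤ m) (Fi Fj : Matrix (Fin m) (Fin 2) ℝ) :
    sInf {x : ℝ | ∃ Q : Matrix (Fin 2) (Fin 2) ℝ,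
        Qᵀ * Q = 1 ∧ x = (frobNorm (Fj * Q - Fi)) ^ 2}
      = Matrix.trace (Fi * Fiᵀ) + Matrix.trace (Fj * Fjᵀ)
        - 2 * Real.sqrt ((frobNorm (Fiᵀ * Fj)) ^ 2 + 2 * |(Fiᵀ * Fj).det|) :=
  stmt5_general m Fi Fj
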